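/- The set N = {(M,N) ∈ ℂ⁶ : M₁ = M₃ = N₂ = 0, N₁² + N₃² = 1} is invariant under the flow of the Euler-Poisson equations dM/dt = M × (J M) + N × L, dN/dt = N × (J M), where L = (1,0,0) and J is the symmetric matrix with rows (a,0,2d), (0,1,0), (2d,0,c); moreover N ⊂ {⟨M,N⟩ = 0}, and the restricted dynamics is dM₂/dt = N₃, dN₁/dt = −M₂N₃, dN₃/dt = M₂N₁. -/

import Mathlib

/-!
A point of `𝒩` has `M` on the second body axis, which `J` fixes; hence `M × JM = 0` and the
field reduces to `dM = N × L`, `dN = N × M`. Tangency to `N₁² + N₃² = 1` is `N ⬝ (N × JM) = 0`.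
-/

open Matrix

variable {R : Type*} [CommRing R]

lemma mulVec_eq_self_of_apply_zero_of_apply_two (a b b' c : R) {M : Fin 3 → R}
    (h0 : M 0 = 0) (h2 : M 2 = 0) : !![a, 0, b; 0, 1, 0; b', 0, c] *ᵥ M = M := by
  ext i
  fin_cases i <;> simp [mulVec, dotProduct, Fin.sum_univ_three, h0, h2]

lemma dotProduct_eq_zero_of_apply_one_eq_zero {M N : Fin 3 → R}
    (hM0 : M 0 = 0) (hM2 : M 2 = 0) (hN1 : N 1 = 0) : M ⬝ᵥ N = 0 := by
  simp [vec3_dotProduct, hM0, hM2, hN1]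

theorem invariant_manifold_first_solution_general
    (a c d : ℂ) (M N : Fin 3 → ℂ)
    (hM1 : M 0 = 0) (hM3 : M 2 = 0) (hN2 : N 1 = 0) :
    let J : Matrix (Fin 3) (Fin 3) ℂ := !![a, 0, 2*d; 0, 1, 0; 2*d, 0, c]
    let dM : Fin 3 → ℂ := crossProduct M (J.mulVec M) + crossProduct N ![1, 0, 0]
    let dN : Fin 3 → ℂ := crossProduct N (J.mulVec M)
    dM 0 = 0 ∧ dM 2 = 0 ∧ dN 1 = 0 ∧
    2 * N 0 * dN 0 + 2 * N 2 * dN 2 = 0 ∧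
    M ⬝ᵥ N = 0 ∧
    dM 1 = N 2 ∧ dN 0 = -(M 1 * N 2) ∧ dN 2 = M 1 * N 0 := by
  intro J dM dN
  have hJM : J *ᵥ M = M := mulVec_eq_self_of_apply_zero_of_apply_two a _ _ c hM1 hM3
  have hdM : dM = N ⨯₃ ![1, 0, 0] := by simp only [dM, hJM, cross_self, zero_add]
  have hdN : dN = N ⨯₃ M := by simp only [dN, hJM]
  have htangent : N ⬝ᵥ dN = 0 := dot_self_cross N _
  rw [vec3_dotProduct, hN2, zero_mul, add_zero] at htangent
  refine ⟨?_, ?_, ?_, by linear_combination 2 * htangent,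
    dotProduct_eq_zero_of_apply_one_eq_zero hM1 hM3 hN2, ?_, ?_, ?_⟩ <;>
  simp [hdM, hdN, cross_apply, hM1, hM3, hN2, mul_comm]

/-- The set `𝒩 = {(M,N) ∈ ℂ⁶ : M₁ = M₃ = N₂ = 0, N₁² + N₃² = 1}` is invariant
under the Euler-Poisson vector field with `L = (1,0,0)` and
`J = [[a,0,2d],[0,1,0],[2d,0,c]]`: at every point of `𝒩` the vector field is
tangent to `𝒩` (its `M₁`, `M₃`, `N₂` components vanish and the derivative of
`N₁² + N₃²` along the field vanishes); moreover `𝒩 ⊂ {⟨M,N⟩ = 0}`, and the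
restricted dynamics is `dM₂/dt = N₃`, `dN₁/dt = −M₂N₃`, `dN₃/dt = M₂N₁`. -/
theorem invariant_manifold_first_solution
    (a c d : ℂ) (M N : Fin 3 → ℂ)
    (hM1 : M 0 = 0) (hM3 : M 2 = 0) (hN2 : N 1 = 0)
    (hcirc : N 0 ^ 2 + N 2 ^ 2 = 1) :
    let J : Matrix (Fin 3) (Fin 3) ℂ := !![a, 0, 2*d; 0, 1, 0; 2*d, 0, c]
    let dM : Fin 3 → ℂ := crossProduct M (J.mulVec M) + crossProduct N ![1, 0, 0]
    let dN : Fin 3 → ℂ := crossProduct N (J.mulVec M)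
    dM 0 = 0 ∧ dM 2 = 0 ∧ dN 1 = 0 ∧
    2 * N 0 * dN 0 + 2 * N 2 * dN 2 = 0 ∧
    M ⬝ᵥ N = 0 ∧
    dM 1 = N 2 ∧ dN 0 = -(M 1 * N 2) ∧ dN 2 = M 1 * N 0 :=
  invariant_manifold_first_solution_general a c d M N hM1 hM3 hN2
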